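/- arXiv:2603.27615 — 3 statements merged into one kernel-verified Lean document; each statement's English description precedes it below -/
import Mathlib

section
/- The system of inequalities |x_i - k(t_i - t_l) - b| ≤ δ for all i in a finite index set W (with distinct times t_i) is feasible in (k,b) ∈ ℝ² if and only if m ≤ M, where m = max over pairs i,j ∈ W with t_i > t_j of ((x_i - x_j)/(t_i - t_j) - 2δ/(t_i - t_j)) and M = min over such pairs of ((x_i - x_j)/(t_i - t_j) + 2δ/(t_i - t_j)). -/
lemma adf_midpoint_aux (S : Finset ℕ) (hS : S.Nonempty) (y : ℕ → ℝ) (δ : ℝ)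
    (h : ∀ i ∈ S, ∀ j ∈ S, y i - y j ≤ 2 * δ) :
    ∃ b : ℝ, ∀ i ∈ S, |y i - b| ≤ δ := by
  refine ⟨(S.sup' hS y + S.inf' hS y) / 2, fun i hi => ?_⟩
  obtain ⟨a, ha, hsa⟩ := Finset.exists_mem_eq_sup' hS y
  obtain ⟨c, hc, hnc⟩ := Finset.exists_mem_eq_inf' hS y
  have h1 : y i ≤ S.sup' hS y := Finset.le_sup' y hi
  have h2 : S.inf' hS y ≤ y i := Finset.inf'_le y hi
  have h3 : S.sup' hS y - S.inf' hS y ≤ 2 * δ := by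
    rw [hsa, hnc]; exact h a ha c hc
  rw [abs_le]
  constructor <;> linarith

/-- Theorem 1 of the paper: the system of inequalities
`|x_i - k (t_i - t_l) - b| ≤ δ`, `i ∈ W`, is feasible in `(k,b)` iff `m ≤ M`. -/
theorem adf_feasibility_iff (t x : ℕ → ℝ) (ht : StrictMono t)
    (W : Finset ℕ) (l : ℕ) (hl : l ∈ W) (hmax : ∀ i ∈ W, i ≤ l)
    (hcard : 2 ≤ W.card) (δ : ℝ) (hδ : 0 < δ) :
    (∃ k b : ℝ, ∀ i ∈ W, |x i - k * (t i - t l) - b| ≤ δ) ↔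
      sSup ((fun p : ℕ × ℕ =>
          (x p.1 - x p.2) / (t p.1 - t p.2) - 2 * δ / (t p.1 - t p.2)) ''
        {p | p.1 ∈ W ∧ p.2 ∈ W ∧ t p.2 < t p.1}) ≤
      sInf ((fun p : ℕ × ℕ =>
          (x p.1 - x p.2) / (t p.1 - t p.2) + 2 * δ / (t p.1 - t p.2)) ''
        {p | p.1 ∈ W ∧ p.2 ∈ W ∧ t p.2 < t p.1}) := by
  set P : Set (ℕ × ℕ) := {p | p.1 ∈ W ∧ p.2 ∈ W ∧ t p.2 < t p.1} with hPdef
  have hPfin : P.Finite := by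
    apply Set.Finite.subset (W ×ˢ W).finite_toSet
    rintro ⟨i, j⟩ ⟨hi, hj, -⟩
    simp [Finset.mem_product, hi, hj]
  obtain ⟨i0, hi0W, hi0l⟩ := Finset.exists_mem_ne (show 1 < W.card by omega) l
  have hPne : P.Nonempty :=
    ⟨(l, i0), hl, hi0W, ht (lt_of_le_of_ne (hmax i0 hi0W) hi0l)⟩
  have hSmfin := hPfin.image (fun p : ℕ × ℕ =>
    (x p.1 - x p.2) / (t p.1 - t p.2) - 2 * δ / (t p.1 - t p.2))
  have hSMfin := hPfin.image (fun p : ℕ × ℕ =>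
    (x p.1 - x p.2) / (t p.1 - t p.2) + 2 * δ / (t p.1 - t p.2))
  constructor
  · rintro ⟨k, b, h⟩
    apply csSup_le (hPne.image _)
    rintro _ ⟨⟨i, j⟩, ⟨hi, hj, hij⟩, rfl⟩
    apply le_csInf (hPne.image _)
    rintro _ ⟨⟨i', j'⟩, ⟨hi', hj', hij'⟩, rfl⟩
    have hd : 0 < t i - t j := sub_pos.2 hij
    have hd' : 0 < t i' - t j' := sub_pos.2 hij'
    have h1 := abs_le.1 (h i hi)
    have h2 := abs_le.1 (h j hj)
    have h1' := abs_le.1 (h i' hi')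
    have h2' := abs_le.1 (h j' hj')
    have e1 : (x i - x j) / (t i - t j) - 2 * δ / (t i - t j) ≤ k := by
      rw [← sub_div, div_le_iff₀ hd]
      have hr : k * (t i - t j) = k * (t i - t l) - k * (t j - t l) := by ring
      linarith [hr]
    have e2 : k ≤ (x i' - x j') / (t i' - t j') + 2 * δ / (t i' - t j') := by
      rw [← add_div, le_div_iff₀ hd']
      have hr : k * (t i' - t j') = k * (t i' - t l) - k * (t j' - t l) := by ring
      linarith [hr]
    exact le_trans e1 e2
  · intro hmM
    set m := sSup ((fun p : ℕ × ℕ =>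
        (x p.1 - x p.2) / (t p.1 - t p.2) - 2 * δ / (t p.1 - t p.2)) '' P) with hm
    have key : ∀ i ∈ W, ∀ j ∈ W, x i - x j - m * (t i - t j) ≤ 2 * δ := by
      intro i hi j hj
      rcases lt_trichotomy (t j) (t i) with hlt | heq | hgt
      · have hmem : ((i, j) : ℕ × ℕ) ∈ P := ⟨hi, hj, hlt⟩
        have hle : (x i - x j) / (t i - t j) - 2 * δ / (t i - t j) ≤ m :=
          le_csSup hSmfin.bddAbove (Set.mem_image_of_mem _ hmem)
        have hd : 0 < t i - t j := sub_pos.2 hlt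
        rw [← sub_div, div_le_iff₀ hd] at hle
        nlinarith [hle]
      · have hij : j = i := ht.injective heq
        subst hij
        simp
        linarith
      · have hmem : ((j, i) : ℕ × ℕ) ∈ P := ⟨hj, hi, hgt⟩
        have hge : m ≤ (x j - x i) / (t j - t i) + 2 * δ / (t j - t i) :=
          hmM.trans (csInf_le hSMfin.bddBelow (Set.mem_image_of_mem _ hmem))
        have hd : 0 < t j - t i := sub_pos.2 hgt
        rw [← add_div, le_div_iff₀ hd] at hge
        have hr : m * (t i - t j) = -(m * (t j - t i)) := by ring
        linarith [hge, hr]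
    have hW : W.Nonempty := Finset.card_pos.1 (by omega)
    obtain ⟨b, hb⟩ := adf_midpoint_aux W hW (fun i => x i - m * (t i - t l)) δ
      (by
        intro i hi j hj
        have hk := key i hi j hj
        have hr : m * (t i - t j) = m * (t i - t l) - m * (t j - t l) := by ring
        linarith [hk, hr])
    exact ⟨m, b, hb⟩
end

section
/- Conversely, if m ≤ M, then choosing any slope k ∈ [m, M] there exists b ∈ ℝ such that |x_i − k(t_i − t_l) − b| ≤ δ for all i in the window; specifically b = (max_i(x_i − k(t_i − t_l)) + min_i(x_i − k(t_i − t_l)))/2 works. -/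
/-- Converse direction: if `m ≤ M` then any slope `k ∈ [m, M]` together with the
midpoint intercept `b = (max_i (x_i - k(t_i - t_l)) + min_i (x_i - k(t_i - t_l)))/2`
satisfies all the feasibility inequalities. -/
theorem adf_mM_implies_feasible (t x : ℕ → ℝ) (ht : StrictMono t)
    (W : Finset ℕ) (l : ℕ) (hl : l ∈ W) (hmax : ∀ i ∈ W, i ≤ l)
    (hcard : 2 ≤ W.card) (δ : ℝ) (hδ : 0 < δ)
    (hmM : sSup ((fun p : ℕ × ℕ => (x p.1 - x p.2 - 2 * δ) / (t p.1 - t p.2)) ''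
        {p | p.1 ∈ W ∧ p.2 ∈ W ∧ t p.2 < t p.1}) ≤
      sInf ((fun p : ℕ × ℕ => (x p.1 - x p.2 + 2 * δ) / (t p.1 - t p.2)) ''
        {p | p.1 ∈ W ∧ p.2 ∈ W ∧ t p.2 < t p.1})) :
    ∀ k : ℝ,
      sSup ((fun p : ℕ × ℕ => (x p.1 - x p.2 - 2 * δ) / (t p.1 - t p.2)) ''
          {p | p.1 ∈ W ∧ p.2 ∈ W ∧ t p.2 < t p.1}) ≤ k →
      k ≤ sInf ((fun p : ℕ × ℕ => (x p.1 - x p.2 + 2 * δ) / (t p.1 - t p.2)) ''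
          {p | p.1 ∈ W ∧ p.2 ∈ W ∧ t p.2 < t p.1}) →
      ∀ i ∈ W,
        |x i - k * (t i - t l) -
          (sSup ((fun j => x j - k * (t j - t l)) '' (W : Set ℕ)) +
            sInf ((fun j => x j - k * (t j - t l)) '' (W : Set ℕ))) / 2| ≤ δ := by
  intro k hmk hkM i hi
  set y : ℕ → ℝ := fun j => x j - k * (t j - t l) with hy
  set S : Set ℝ := y '' (W : Set ℕ) with hS
  have hSfin : S.Finite := (W.finite_toSet).image _
  have hSne : S.Nonempty := ⟨y l, ⟨l, hl, rfl⟩⟩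
  have hbddA : BddAbove S := hSfin.bddAbove
  have hbddB : BddBelow S := hSfin.bddBelow
  -- pair set finiteness
  have hPfin : ({p : ℕ × ℕ | p.1 ∈ W ∧ p.2 ∈ W ∧ t p.2 < t p.1}).Finite := by
    apply Set.Finite.subset ((W.finite_toSet).prod (W.finite_toSet))
    rintro ⟨a, b⟩ ⟨ha, hb, _⟩; exact ⟨ha, hb⟩
  have hP1fin := hPfin.image (fun p : ℕ × ℕ => (x p.1 - x p.2 - 2 * δ) / (t p.1 - t p.2))
  have hP2fin := hPfin.image (fun p : ℕ × ℕ => (x p.1 - x p.2 + 2 * δ) / (t p.1 - t p.2))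
  -- key: for a b ∈ W, y a - y b ≤ 2δ
  have key : ∀ a ∈ W, ∀ b ∈ W, y a - y b ≤ 2 * δ := by
    intro a ha b hb
    rcases lt_trichotomy (t b) (t a) with hlt | heq | hgt
    · have hmem : (x a - x b - 2 * δ) / (t a - t b) ∈
          (fun p : ℕ × ℕ => (x p.1 - x p.2 - 2 * δ) / (t p.1 - t p.2)) ''
            {p | p.1 ∈ W ∧ p.2 ∈ W ∧ t p.2 < t p.1} := ⟨(a, b), ⟨ha, hb, hlt⟩, rfl⟩
    
      have h1 : (x a - x b - 2 * δ) / (t a - t b) ≤ k :=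
        le_trans (le_csSup hP1fin.bddAbove hmem) hmk
      have hpos : 0 < t a - t b := sub_pos.mpr hlt
      have := (div_le_iff₀ hpos).mp h1
      simp only [hy]
      nlinarith
    · have : a = b := ht.injective heq.symm
      subst this; nlinarith
    · have hmem : (x b - x a + 2 * δ) / (t b - t a) ∈
          (fun p : ℕ × ℕ => (x p.1 - x p.2 + 2 * δ) / (t p.1 - t p.2)) ''
            {p | p.1 ∈ W ∧ p.2 ∈ W ∧ t p.2 < t p.1} := ⟨(b, a), ⟨hb, ha, hgt⟩, rfl⟩
      have h1 : k ≤ (x b - x a + 2 * δ) / (t b - t a) :=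
        le_trans hkM (csInf_le hP2fin.bddBelow hmem)
      have hpos : 0 < t b - t a := sub_pos.mpr hgt
      have := (le_div_iff₀ hpos).mp h1
      simp only [hy]
      nlinarith
  -- sup and inf are attained
  obtain ⟨a, ha, hya⟩ : ∃ a ∈ W, y a = sSup S := by
    have := hSne.csSup_mem hSfin
    rcases this with ⟨a, ha, hya⟩; exact ⟨a, ha, hya⟩
  obtain ⟨b, hb, hyb⟩ : ∃ b ∈ W, y b = sInf S := by
    have := hSne.csInf_mem hSfin
    rcases this with ⟨b, hb, hyb⟩; exact ⟨b, hb, hyb⟩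
  have hgap : sSup S - sInf S ≤ 2 * δ := by
    rw [← hya, ← hyb]; exact key a ha b hb
  have hle : y i ≤ sSup S := le_csSup hbddA ⟨i, hi, rfl⟩
  have hge : sInf S ≤ y i := csInf_le hbddB ⟨i, hi, rfl⟩
  have hyi : y i = x i - k * (t i - t l) := rfl
  rw [abs_le]
  constructor <;> linarith
end

section
/- Slope estimate accuracy on noisy linear signals: if x_i = a(t_i − t_l) + c + w_i with |w_i| ≤ δ for all i in the window, then the window-feasibility condition (existence of k, b with residuals ≤ δ) holds with (k,b) = (a,c), and any slope k satisfying all feasibility inequalities obeys |k − a| ≤ 4δ/(t_l − t_{l−R}). -/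
/-- Slope accuracy on noisy linear signals: if `x_i = a(t_i - t_l) + c + w_i`
with `|w_i| ≤ δ` on the window, then `(a, c)` is feasible, and any feasible
slope `k` satisfies `|k - a| ≤ 4δ/(t_l - t_{l-R})`. -/
theorem adf_slope_accuracy (t x : ℕ → ℝ) (l R : ℕ) (hR : 1 ≤ R) (hRl : R ≤ l)
    (ht : StrictMono t) (a c δ : ℝ) (hδ : 0 < δ) (w : ℕ → ℝ)
    (hlin : ∀ i ∈ Finset.Icc (l - R) l, x i = a * (t i - t l) + c + w i)
    (hw : ∀ i ∈ Finset.Icc (l - R) l, |w i| ≤ δ) :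
    (∀ i ∈ Finset.Icc (l - R) l, |x i - a * (t i - t l) - c| ≤ δ) ∧
    (∀ k b : ℝ, (∀ i ∈ Finset.Icc (l - R) l, |x i - k * (t i - t l) - b| ≤ δ) →
      |k - a| ≤ 4 * δ / (t l - t (l - R))) := by
  have hfeas : ∀ i ∈ Finset.Icc (l - R) l, |x i - a * (t i - t l) - c| ≤ δ := by
    intro i hi
    rw [hlin i hi]
    have : a * (t i - t l) + c + w i - a * (t i - t l) - c = w i := by ring
    rw [this]; exact hw i hi
  refine ⟨hfeas, fun k b hk => ?_⟩
  have hlR : l - R < l := Nat.sub_lt (lt_of_lt_of_le hR hRl) hR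
  have hpos : 0 < t l - t (l - R) := sub_pos.mpr (ht hlR)
  have hmemL : l ∈ Finset.Icc (l - R) l := Finset.mem_Icc.mpr ⟨Nat.sub_le _ _, le_refl _⟩
  have hmemR : l - R ∈ Finset.Icc (l - R) l := Finset.mem_Icc.mpr ⟨le_refl _, Nat.sub_le _ _⟩
  have h1 := hk l hmemL
  have h2 := hk (l - R) hmemR
  have h3 := hfeas l hmemL
  have h4 := hfeas (l - R) hmemR
  rw [sub_self] at h1 h3
  -- |(k - a) * (t (l-R) - t l)| ≤ 4δ
  have key : |(k - a) * (t (l - R) - t l)| ≤ 4 * δ := by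
    have : (k - a) * (t (l - R) - t l) =
        (x (l - R) - a * (t (l - R) - t l) - c) - (x (l - R) - k * (t (l - R) - t l) - b)
        + ((x l - k * 0 - b) - (x l - a * 0 - c)) := by ring
    rw [this]
    calc _ ≤ |(x (l - R) - a * (t (l - R) - t l) - c) - (x (l - R) - k * (t (l - R) - t l) - b)|
            + |(x l - k * 0 - b) - (x l - a * 0 - c)| := abs_add_le _ _
      _ ≤ (|x (l - R) - a * (t (l - R) - t l) - c| + |x (l - R) - k * (t (l - R) - t l) - b|)
            + (|x l - k * 0 - b| + |x l - a * 0 - c|) :=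
          add_le_add (abs_sub _ _) (abs_sub _ _)
      _ ≤ (δ + δ) + (δ + δ) := by
          exact add_le_add (add_le_add h4 h2) (add_le_add h1 h3)
      _ = 4 * δ := by ring
  rw [abs_mul, abs_sub_comm (t (l - R)), abs_of_pos hpos] at key
  rw [le_div_iff₀ hpos]
  exact key
end
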